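/- arXiv:math-ph/0203007 — 3 statements merged into one kernel-verified Lean document; each statement's English description precedes it below -/
import Mathlib

section
/- Let d > 0, γ ≥ 0 with dγ < 4/5, and set α = γ/(2(1-dγ)). If μ ∈ (π²/(4d²), π²/d²) satisfies √μ = -α tan(√μ d) (so μ is the lowest eigenvalue with Robin parameter α), then α · (2μ/(d(α²+μ)+α)) - α² ≥ 0 whenever dγ ≤ 2/3. -/
open Real Set

/-- If `γ ≥ 0`, `dγ ≤ 2/3`, `α = γ/(2(1-dγ))`, and `μ ∈ (π²/(4d²), π²/d²)` solves
`√μ = -α tan(√μ d)`, then `α (2μ/(d(α²+μ)+α)) - α² ≥ 0`. -/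
theorem stmt7 (d γ α μ : ℝ) (hd : 0 < d) (hγ : 0 ≤ γ) (hdγ : d * γ < 4/5)
    (hα : α = γ / (2 * (1 - d * γ)))
    (hμ : μ ∈ Ioo (π ^ 2 / (4 * d ^ 2)) (π ^ 2 / d ^ 2))
    (heq : Real.sqrt μ = -α * Real.tan (Real.sqrt μ * d))
    (hdγ' : d * γ ≤ 2/3) :
    α * (2 * μ / (d * (α ^ 2 + μ) + α)) - α ^ 2 ≥ 0 := by
  have h1 : 0 < 1 - d * γ := by linarith
  have hα0 : 0 ≤ α := by rw [hα]; positivity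
  have hdα : d * α ≤ 1 := by
    rw [hα, ← mul_div_assoc, div_le_one (by linarith)]
    linarith
  have hpi : (3 : ℝ) < π := Real.pi_gt_three
  have hμlb : π ^ 2 / (4 * d ^ 2) < μ := hμ.1
  have hμ2 : 2 / d ^ 2 < μ := by
    have h9 : (9 : ℝ) < π ^ 2 := by nlinarith
    have : 2 / d ^ 2 < π ^ 2 / (4 * d ^ 2) := by
      rw [div_lt_div_iff₀ (by positivity) (by positivity)]
      nlinarith [sq_nonneg d, pow_pos hd 2]
    linarith
  have hμpos : 0 < μ := lt_trans (by positivity) hμ2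
  have hD : 0 < d * (α ^ 2 + μ) + α := by
    have := mul_pos hd (by positivity : (0:ℝ) < α ^ 2 + μ)
    linarith
  have key : α ≤ 2 * μ / (d * (α ^ 2 + μ) + α) := by
    rw [le_div_iff₀ hD]
    have hd2μ : 2 < d ^ 2 * μ := by
      rw [div_lt_iff₀ (by positivity)] at hμ2
      linarith
    nlinarith [mul_nonneg hd.le hα0, mul_nonneg (mul_nonneg hd.le hα0) hα0,
      mul_nonneg hα0 hα0, sq_nonneg (d * α), mul_pos hd hμpos,
      mul_le_mul_of_nonneg_right hdα (mul_nonneg hα0 hα0),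
      mul_le_mul_of_nonneg_right hdα hμpos.le,
      mul_le_mul_of_nonneg_right hdα hα0]
  have := mul_le_mul_of_nonneg_left key hα0
  nlinarith [this]
end

section
/- Let d > 0 and γ: ℝ → ℝ be continuous with compact support, γ ≤ 0 everywhere, and ∫_ℝ γ(s) ds < 0. Assume sup|γ| < 1/d and let γ₊ = max(sup γ, 0). Let φ ∈ 𝒮(ℝ) (Schwartz) with φ(s)=1 on the support of γ, and for σ > 0 define φ_σ by external scaling outside [-s₀,s₀] ⊇ supp γ. Then with Φ_σ(s,u) = √(2/d) φ_σ(s) sin(πu/(2d)), the quadratic form value q[Φ_σ] = ∫_ℝ∫₀^d ( |∂_s Φ_σ|²/(1-uγ(s)) + |∂_u Φ_σ|²(1-uγ(s)) ) du ds - (π²/(4d²))∫_ℝ∫₀^d |Φ_σ|²(1-uγ(s)) du ds satisfies q[Φ_σ] ≤ σ‖φ'‖²_{L²(ℝ)}/(1-dγ₊) + (1/d)∫_ℝ γ(s) ds, and hence q[Φ_σ] < 0 for σ sufficiently small. -/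
open Real Set MeasureTheory intervalIntegral

/-!
The trial function separates variables. Its transverse factor `√(2/d) sin(πu/(2d))` is the
normalised ground state of the Dirichlet–Neumann interval `(0, d)`, so the shift `π²/(4d²)`
cancels the transverse energy except for the curvature correction, which integrates in `u` to
exactly `γ(s)/d`. Since `φ_σ ≡ 1` near `supp γ`, the longitudinal derivative never meets the
weight `1 - uγ`, and `q[Φ_σ] = ‖φ_σ'‖² + (1/d) ∫ γ`. External scaling only changes the tails,
where the substitution `t = ±s₀ + σ(s ∓ s₀)` gives `‖φ_σ'‖² = σ ∫_{|t| > s₀} φ'² ≤ σ ‖φ'‖²`;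
finally `γ ≤ 0` forces `γ₊ = 0`.
-/

/-- `φ_σ = φ ∘ externalScaling s₀ σ`: the identity on `[-s₀, s₀]`, and outside it the dilation
by `σ` about the nearer endpoint. -/
noncomputable def externalScaling (s₀ σ s : ℝ) : ℝ :=
  max (-s₀) (min s s₀) + σ * (s - max (-s₀) (min s s₀))

section ExternalScaling

variable {s₀ σ : ℝ}

theorem externalScaling_of_mem_Icc (σ : ℝ) {s : ℝ} (hs : s ∈ Icc (-s₀) s₀) :
    externalScaling s₀ σ s = s := by
  simp [externalScaling, min_eq_left hs.2, max_eq_right hs.1]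

theorem externalScaling_of_le (hs₀ : 0 ≤ s₀) (σ : ℝ) {s : ℝ} (hs : s₀ ≤ s) :
    externalScaling s₀ σ s = s₀ + σ * (s - s₀) := by
  simp [externalScaling, min_eq_right hs, max_eq_right (by linarith : -s₀ ≤ s₀)]

theorem externalScaling_of_le_neg (hs₀ : 0 ≤ s₀) (σ : ℝ) {s : ℝ} (hs : s ≤ -s₀) :
    externalScaling s₀ σ s = -s₀ + σ * (s + s₀) := by
  simp only [externalScaling, min_eq_left (by linarith : s ≤ s₀), max_eq_left hs]
  ring

theorem externalScaling_eq_ite (hs₀ : 0 ≤ s₀) (σ s : ℝ) :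
    externalScaling s₀ σ s = if |s| ≤ s₀ then s
      else if s₀ ≤ s then s₀ + σ * (s - s₀) else -s₀ + σ * (s + s₀) := by
  split_ifs with h₁ h₂
  · exact externalScaling_of_mem_Icc σ (abs_le.1 h₁)
  · exact externalScaling_of_le hs₀ σ h₂
  · exact externalScaling_of_le_neg hs₀ σ (by cases abs_cases s <;> linarith)

theorem externalScaling_one (s : ℝ) : externalScaling s₀ 1 s = s := by
  simp [externalScaling]

theorem externalScaling_externalScaling (hs₀ : 0 ≤ s₀) (hσ : 0 < σ) (τ s : ℝ) :
    externalScaling s₀ τ (externalScaling s₀ σ s) = externalScaling s₀ (τ * σ) s := by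
  rcases le_total s₀ s with h | h
  · rw [externalScaling_of_le hs₀ σ h, externalScaling_of_le hs₀ _ h,
      externalScaling_of_le hs₀ τ (by nlinarith)]
    ring
  rcases le_total s (-s₀) with h' | h'
  · rw [externalScaling_of_le_neg hs₀ σ h', externalScaling_of_le_neg hs₀ _ h',
      externalScaling_of_le_neg hs₀ τ (by nlinarith)]
    ring
  · simp only [externalScaling_of_mem_Icc _ ⟨h', h⟩]

theorem leftInverse_externalScaling (hs₀ : 0 ≤ s₀) (hσ : 0 < σ) :
    Function.LeftInverse (externalScaling s₀ σ⁻¹) (externalScaling s₀ σ) := fun s => by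
  rw [externalScaling_externalScaling hs₀ hσ, inv_mul_cancel₀ hσ.ne', externalScaling_one]

theorem externalScaling_notMem_Icc (hs₀ : 0 ≤ s₀) (hσ : 0 < σ) {s : ℝ}
    (hs : s ∉ Icc (-s₀) s₀) : externalScaling s₀ σ s ∉ Icc (-s₀) s₀ := by
  simp only [mem_Icc, not_and_or, not_le] at hs ⊢
  rcases hs with h | h
  · rw [externalScaling_of_le_neg hs₀ σ h.le]
    left; nlinarith
  · rw [externalScaling_of_le hs₀ σ h.le]
    right; nlinarith

theorem image_compl_Icc_externalScaling (hs₀ : 0 ≤ s₀) (hσ : 0 < σ) :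
    externalScaling s₀ σ '' (Icc (-s₀) s₀)ᶜ = (Icc (-s₀) s₀)ᶜ := by
  refine (MapsTo.image_subset fun s hs => externalScaling_notMem_Icc hs₀ hσ hs).antisymm
    fun s hs => ⟨externalScaling s₀ σ⁻¹ s, externalScaling_notMem_Icc hs₀ (inv_pos.2 hσ) hs, ?_⟩
  rw [externalScaling_externalScaling hs₀ (inv_pos.2 hσ), mul_inv_cancel₀ hσ.ne',
    externalScaling_one]

theorem hasDerivAt_externalScaling (hs₀ : 0 ≤ s₀) (σ : ℝ) {s : ℝ} (hs : s ∉ Icc (-s₀) s₀) :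
    HasDerivAt (externalScaling s₀ σ) σ s := by
  simp only [mem_Icc, not_and_or, not_le] at hs
  rcases hs with h | h
  · have hlin : HasDerivAt (fun t => -s₀ + σ * (t + s₀)) σ s := by
      simpa using ((hasDerivAt_id s).add_const s₀).const_mul σ |>.const_add (-s₀)
    refine hlin.congr_of_eventuallyEq ?_
    filter_upwards [Iio_mem_nhds h] with t ht
    exact externalScaling_of_le_neg hs₀ σ (le_of_lt ht)
  · have hlin : HasDerivAt (fun t => s₀ + σ * (t - s₀)) σ s := by
      simpa using ((hasDerivAt_id s).sub_const s₀).const_mul σ |>.const_add s₀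
    refine hlin.congr_of_eventuallyEq ?_
    filter_upwards [Ioi_mem_nhds h] with t ht
    exact externalScaling_of_le hs₀ σ (le_of_lt ht)

theorem comp_externalScaling_eventuallyEq_const {f : ℝ → ℝ} {c : ℝ}
    (hfc : ∀ s ∈ Icc (-s₀) s₀, f s = c) {s : ℝ} (hs : s ∈ Ioo (-s₀) s₀) :
    (fun t => f (externalScaling s₀ σ t)) =ᶠ[nhds s] fun _ => c := by
  filter_upwards [Ioo_mem_nhds hs.1 hs.2] with t ht
  rw [externalScaling_of_mem_Icc σ (Ioo_subset_Icc_self ht), hfc t (Ioo_subset_Icc_self ht)]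

variable {E : Type*} [NormedAddCommGroup E] [NormedSpace ℝ E]

theorem setIntegral_compl_Icc_comp_externalScaling (hs₀ : 0 ≤ s₀) (hσ : 0 < σ) (g : ℝ → E) :
    ∫ s in (Icc (-s₀) s₀)ᶜ, g (externalScaling s₀ σ s) = σ⁻¹ • ∫ s in (Icc (-s₀) s₀)ᶜ, g s := by
  have h := integral_image_eq_integral_abs_deriv_smul measurableSet_Icc.compl
    (fun s hs => (hasDerivAt_externalScaling hs₀ σ hs).hasDerivWithinAt)
    (leftInverse_externalScaling hs₀ hσ).injective.injOn g
  rw [image_compl_Icc_externalScaling hs₀ hσ, MeasureTheory.integral_smul, abs_of_pos hσ] at h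
  rw [h, smul_smul, inv_mul_cancel₀ hσ.ne', one_smul]

theorem MeasureTheory.IntegrableOn.comp_externalScaling (hs₀ : 0 ≤ s₀) (hσ : 0 < σ) {g : ℝ → E}
    (hg : IntegrableOn g (Icc (-s₀) s₀)ᶜ) :
    IntegrableOn (fun s => g (externalScaling s₀ σ s)) (Icc (-s₀) s₀)ᶜ := by
  have h := integrableOn_image_iff_integrableOn_abs_deriv_smul measurableSet_Icc.compl
    (fun s hs => (hasDerivAt_externalScaling hs₀ σ hs).hasDerivWithinAt)
    (leftInverse_externalScaling hs₀ hσ).injective.injOn g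
  rw [image_compl_Icc_externalScaling hs₀ hσ] at h
  exact (integrable_smul_iff (abs_pos.2 hσ.ne').ne' _).1 (h.1 hg)

theorem MeasureTheory.Integrable.comp_externalScaling (hs₀ : 0 ≤ s₀) (hσ : 0 < σ) {g : ℝ → E}
    (hg : Integrable g) : Integrable fun s => g (externalScaling s₀ σ s) := by
  rw [← integrableOn_univ, ← union_compl_self (Icc (-s₀) s₀)]
  exact (hg.integrableOn.congr_fun (fun s hs => by rw [externalScaling_of_mem_Icc σ hs])
    measurableSet_Icc).union (hg.integrableOn.comp_externalScaling hs₀ hσ)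

theorem sq_deriv_comp_externalScaling_ae_eq (hs₀ : 0 ≤ s₀) {f : ℝ → ℝ} (hf : Differentiable ℝ f)
    {c : ℝ} (hfc : ∀ s ∈ Icc (-s₀) s₀, f s = c) :
    (fun s => deriv (fun t => f (externalScaling s₀ σ t)) s ^ 2) =ᵐ[volume]
      (Icc (-s₀) s₀)ᶜ.indicator fun s => σ ^ 2 * deriv f (externalScaling s₀ σ s) ^ 2 := by
  filter_upwards [(toFinite ({-s₀, s₀} : Set ℝ)).countable.ae_notMem volume] with s hs
  by_cases hmem : s ∈ Icc (-s₀) s₀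
  · have hs' : s ∈ Ioo (-s₀) s₀ := by
      simp only [mem_insert_iff, mem_singleton_iff, not_or] at hs
      exact ⟨lt_of_le_of_ne hmem.1 (Ne.symm hs.1), lt_of_le_of_ne hmem.2 hs.2⟩
    rw [indicator_of_notMem (notMem_compl_iff.2 hmem),
      (comp_externalScaling_eventuallyEq_const hfc hs').deriv_eq, deriv_const,
      zero_pow two_ne_zero]
  · have hchain : deriv (fun t => f (externalScaling s₀ σ t)) s
        = deriv f (externalScaling s₀ σ s) * σ :=
      ((hf _).hasDerivAt.comp s (hasDerivAt_externalScaling hs₀ σ hmem)).deriv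
    rw [indicator_of_mem hmem, hchain]
    ring

theorem integrable_sq_deriv_comp_externalScaling (hs₀ : 0 ≤ s₀) (hσ : 0 < σ) {f : ℝ → ℝ}
    (hf : Differentiable ℝ f) {c : ℝ} (hfc : ∀ s ∈ Icc (-s₀) s₀, f s = c)
    (hf' : Integrable fun s => deriv f s ^ 2) :
    Integrable fun s => deriv (fun t => f (externalScaling s₀ σ t)) s ^ 2 := by
  refine Integrable.congr ?_ (sq_deriv_comp_externalScaling_ae_eq hs₀ hf hfc).symm
  exact IntegrableOn.integrable_indicator
    ((hf'.integrableOn.comp_externalScaling hs₀ hσ).const_mul (σ ^ 2)) measurableSet_Icc.compl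

theorem integral_sq_deriv_comp_externalScaling (hs₀ : 0 ≤ s₀) (hσ : 0 < σ) {f : ℝ → ℝ}
    (hf : Differentiable ℝ f) {c : ℝ} (hfc : ∀ s ∈ Icc (-s₀) s₀, f s = c) :
    ∫ s, deriv (fun t => f (externalScaling s₀ σ t)) s ^ 2
      = σ * ∫ s in (Icc (-s₀) s₀)ᶜ, deriv f s ^ 2 := by
  rw [integral_congr_ae (sq_deriv_comp_externalScaling_ae_eq hs₀ hf hfc),
    MeasureTheory.integral_indicator measurableSet_Icc.compl, MeasureTheory.integral_const_mul,
    setIntegral_compl_Icc_comp_externalScaling hs₀ hσ (fun s => deriv f s ^ 2), smul_eq_mul]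
  field_simp

end ExternalScaling

noncomputable def stripForm (d : ℝ) (γ : ℝ → ℝ) (Φ : ℝ → ℝ → ℝ) : ℝ :=
  (∫ s, ∫ u in (0:ℝ)..d,
    ((deriv (fun s' => Φ s' u) s) ^ 2 / (1 - u * γ s)
      + (deriv (fun u' => Φ s u') u) ^ 2 * (1 - u * γ s)))
  - (π ^ 2 / (4 * d ^ 2)) * ∫ s, ∫ u in (0:ℝ)..d, (Φ s u) ^ 2 * (1 - u * γ s)

section Transverse

variable {d : ℝ}

theorem integral_cos_mul_one_sub (hd : d ≠ 0) (r : ℝ) :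
    ∫ u in (0:ℝ)..d, cos (π * u / d) * (1 - u * r) = 2 * r * d ^ 2 / π ^ 2 := by
  have hderiv : ∀ u ∈ uIcc 0 d, HasDerivAt
      (fun u => d / π * sin (π * u / d) - r * (d / π * u * sin (π * u / d)
        + (d / π) ^ 2 * cos (π * u / d))) (cos (π * u / d) * (1 - u * r)) u := by
    intro u _
    have hlin : HasDerivAt (fun u => π * u / d) (π / d) u := by
      simpa using ((hasDerivAt_id u).const_mul π).div_const d
    refine ((hlin.sin.const_mul (d / π)).sub
      ((((hasDerivAt_id' u).const_mul (d / π)).mul hlin.sin).add (hlin.cos.const_mul ((d / π) ^ 2))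
        |>.const_mul r)).congr_deriv ?_
    field_simp
    ring
  rw [integral_eq_sub_of_hasDerivAt hderiv (by apply Continuous.intervalIntegrable; fun_prop)]
  simp only [mul_div_cancel_right₀ _ hd, mul_zero, zero_div, sin_pi, cos_pi, sin_zero, cos_zero]
  field_simp
  ring

theorem integral_one_sub_mul (r : ℝ) : ∫ u in (0:ℝ)..d, (1 - u * r) = d - r * d ^ 2 / 2 := by
  rw [intervalIntegral.integral_sub intervalIntegrable_const (intervalIntegrable_id.mul_const r),
    intervalIntegral.integral_mul_const, integral_id, intervalIntegral.integral_const, smul_eq_mul]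
  ring

theorem integral_sin_sq_mul_one_sub (hd : d ≠ 0) (r : ℝ) :
    ∫ u in (0:ℝ)..d, sin (π * u / (2 * d)) ^ 2 * (1 - u * r)
      = d / 2 - r * (d ^ 2 / 4 + d ^ 2 / π ^ 2) := by
  have h : ∀ u : ℝ, sin (π * u / (2 * d)) ^ 2 * (1 - u * r)
      = ((1 - u * r) - cos (π * u / d) * (1 - u * r)) / 2 := fun u => by
    rw [sin_sq_eq_half_sub, show 2 * (π * u / (2 * d)) = π * u / d by field_simp]
    ring
  simp_rw [h]
  rw [intervalIntegral.integral_div,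
    intervalIntegral.integral_sub (by apply Continuous.intervalIntegrable; fun_prop)
      (by apply Continuous.intervalIntegrable; fun_prop), integral_one_sub_mul,
    integral_cos_mul_one_sub hd]
  ring

theorem integral_cos_sq_mul_one_sub (hd : d ≠ 0) (r : ℝ) :
    ∫ u in (0:ℝ)..d, cos (π * u / (2 * d)) ^ 2 * (1 - u * r)
      = d / 2 - r * (d ^ 2 / 4 - d ^ 2 / π ^ 2) := by
  have h : ∀ u : ℝ, cos (π * u / (2 * d)) ^ 2 * (1 - u * r)
      = (1 - u * r) - sin (π * u / (2 * d)) ^ 2 * (1 - u * r) := fun u => by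
    rw [cos_sq']
    ring
  simp_rw [h]
  rw [intervalIntegral.integral_sub (by apply Continuous.intervalIntegrable; fun_prop)
    (by apply Continuous.intervalIntegrable; fun_prop), integral_one_sub_mul,
    integral_sin_sq_mul_one_sub hd]
  ring

theorem integral_sq_sin_mode (hd : 0 < d) {a r : ℝ} (har : a ^ 2 * r = r) :
    ∫ u in (0:ℝ)..d, (√(2 / d) * a * sin (π * u / (2 * d))) ^ 2 * (1 - u * r)
      = a ^ 2 - (d / 2 + 2 * d / π ^ 2) * r := by
  have h : ∀ u : ℝ, (√(2 / d) * a * sin (π * u / (2 * d))) ^ 2 * (1 - u * r)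
      = 2 / d * a ^ 2 * (sin (π * u / (2 * d)) ^ 2 * (1 - u * r)) := fun u => by
    rw [mul_pow, mul_pow, sq_sqrt (by positivity)]
    ring
  simp_rw [h]
  rw [intervalIntegral.integral_const_mul, integral_sin_sq_mul_one_sub hd.ne']
  linear_combination (norm := skip) (-(2 / d) * (d ^ 2 / 4 + d ^ 2 / π ^ 2)) * har
  field_simp
  ring

theorem integral_grad_sq_sin_mode (hd : 0 < d) {f : ℝ → ℝ} {s r : ℝ}
    (hfr : f s ^ 2 * r = r) (hf'r : deriv f s * r = 0) :
    ∫ u in (0:ℝ)..d,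
      ((deriv (fun s' => √(2 / d) * f s' * sin (π * u / (2 * d))) s) ^ 2 / (1 - u * r)
        + (deriv (fun u' => √(2 / d) * f s * sin (π * u' / (2 * d))) u) ^ 2 * (1 - u * r))
      = deriv f s ^ 2 + π ^ 2 / (4 * d ^ 2) * (f s ^ 2 - (d / 2 + 2 * d / π ^ 2) * r) + r / d := by
  have hderiv_u : ∀ u : ℝ, deriv (fun u' => √(2 / d) * f s * sin (π * u' / (2 * d))) u
      = √(2 / d) * f s * (cos (π * u / (2 * d)) * (π / (2 * d))) := fun u => by
    have hlin : HasDerivAt (fun u => π * u / (2 * d)) (π / (2 * d)) u := by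
      simpa using ((hasDerivAt_id u).const_mul π).div_const (2 * d)
    exact (hlin.sin.const_mul _).deriv
  have h : ∀ u : ℝ,
      (deriv (fun s' => √(2 / d) * f s' * sin (π * u / (2 * d))) s) ^ 2 / (1 - u * r)
        + (deriv (fun u' => √(2 / d) * f s * sin (π * u' / (2 * d))) u) ^ 2 * (1 - u * r)
      = 2 / d * deriv f s ^ 2 * (sin (π * u / (2 * d)) ^ 2 * (1 - u * r))
        + 2 / d * f s ^ 2 * (π / (2 * d)) ^ 2 * (cos (π * u / (2 * d)) ^ 2 * (1 - u * r)) := by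
    intro u
    rw [hderiv_u, deriv_mul_const_field, deriv_const_mul_field]
    -- `f' r = 0`, so the weight `1 / (1 - u r)` may be traded for `1 - u r`
    rcases mul_eq_zero.1 hf'r with h0 | h0 <;>
      simp only [h0, mul_pow, sq_sqrt (by positivity : (0:ℝ) ≤ 2 / d)] <;> ring
  simp_rw [h]
  rw [intervalIntegral.integral_add (by apply Continuous.intervalIntegrable; fun_prop)
    (by apply Continuous.intervalIntegrable; fun_prop), intervalIntegral.integral_const_mul,
    intervalIntegral.integral_const_mul, integral_sin_sq_mul_one_sub hd.ne',
    integral_cos_sq_mul_one_sub hd.ne']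
  linear_combination (norm := skip)
    (-(2 / d) * (d ^ 2 / 4 + d ^ 2 / π ^ 2) * deriv f s) * hf'r
      + (-(2 / d) * (π / (2 * d)) ^ 2 * (d ^ 2 / 4 - d ^ 2 / π ^ 2)) * hfr
  field_simp
  ring

theorem stripForm_sin_mode (hd : 0 < d) {γ f : ℝ → ℝ} (hγ : Integrable γ)
    (hf : Integrable fun s => f s ^ 2) (hf' : Integrable fun s => deriv f s ^ 2)
    (hfγ : ∀ s ∈ Function.support γ, f =ᶠ[nhds s] fun _ => 1) :
    stripForm d γ (fun s u => √(2 / d) * f s * sin (π * u / (2 * d)))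
      = (∫ s, deriv f s ^ 2) + (1 / d) * ∫ s, γ s := by
  have hfγ1 : ∀ s, f s ^ 2 * γ s = γ s := fun s => by
    by_cases h : γ s = 0
    · simp [h]
    · simp [(hfγ s h).eq_of_nhds]
  have hf'γ : ∀ s, deriv f s * γ s = 0 := fun s => by
    by_cases h : γ s = 0
    · simp [h]
    · simp [(hfγ s h).deriv_eq]
  have hmass_int : Integrable fun s => f s ^ 2 - (d / 2 + 2 * d / π ^ 2) * γ s :=
    hf.sub (hγ.const_mul _)
  have hgrad_int : Integrable fun s =>
      deriv f s ^ 2 + π ^ 2 / (4 * d ^ 2) * (f s ^ 2 - (d / 2 + 2 * d / π ^ 2) * γ s) :=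
    hf'.add (hmass_int.const_mul _)
  rw [stripForm]
  simp_rw [integral_grad_sq_sin_mode hd (hfγ1 _) (hf'γ _), integral_sq_sin_mode hd (hfγ1 _)]
  rw [integral_add hgrad_int (hγ.div_const d), integral_add hf' (hmass_int.const_mul _),
    MeasureTheory.integral_const_mul, MeasureTheory.integral_div]
  ring

end Transverse

theorem stmt9_general (d s₀ : ℝ) (hd : 0 < d) (hs₀ : 0 < s₀)
    (γ : ℝ → ℝ) (hγc : Continuous γ) (hγsupp : HasCompactSupport γ)
    (hγsupp' : Function.support γ ⊆ Icc (-s₀) s₀)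
    (hγneg : ∀ s, γ s ≤ 0) (hγint : (∫ s, γ s) < 0)
    (γp : ℝ) (hγp : γp = max (⨆ s, γ s) 0)
    (φ : SchwartzMap ℝ ℝ)
    (hφ1 : ∀ s ∈ Icc (-s₀) s₀, φ s = 1)
    (φσ : ℝ → ℝ → ℝ)
    (hφσ : ∀ σ s, φσ σ s = if |s| ≤ s₀ then φ s
        else if s₀ ≤ s then φ (s₀ + σ * (s - s₀)) else φ (-s₀ + σ * (s + s₀)))
    (Φ : ℝ → ℝ → ℝ → ℝ)
    (hΦ : ∀ σ s u, Φ σ s u = Real.sqrt (2 / d) * φσ σ s * Real.sin (π * u / (2 * d)))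
    (Q : ℝ → ℝ)
    (hQ : ∀ σ, Q σ =
      (∫ s, ∫ u in (0:ℝ)..d,
        ((deriv (fun s' => Φ σ s' u) s) ^ 2 / (1 - u * γ s)
          + (deriv (fun u' => Φ σ s u') u) ^ 2 * (1 - u * γ s)))
      - (π ^ 2 / (4 * d ^ 2)) * ∫ s, ∫ u in (0:ℝ)..d, (Φ σ s u) ^ 2 * (1 - u * γ s)) :
    (∀ σ, 0 < σ →
      Q σ ≤ σ * (∫ s, (deriv (⇑φ) s) ^ 2) / (1 - d * γp) + (1 / d) * ∫ s, γ s) ∧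
    ∃ σ₁ > 0, ∀ σ, 0 < σ → σ < σ₁ → Q σ < 0 := by
  have hφ' : Integrable fun s => deriv φ s ^ 2 := by
    simpa only [SchwartzMap.derivCLM_apply] using
      ((SchwartzMap.derivCLM ℝ ℝ φ).memLp 2).integrable_sq
  have hsupp : Function.support γ ⊆ Ioo (-s₀) s₀ := by
    rw [← interior_Icc]
    exact interior_maximal hγsupp' hγc.isOpen_support
  have hQ_eq : ∀ σ, 0 < σ →
      Q σ = σ * (∫ s in (Icc (-s₀) s₀)ᶜ, deriv φ s ^ 2) + (1 / d) * ∫ s, γ s := by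
    intro σ hσ
    have hΦσ : Φ σ
        = fun s u => √(2 / d) * φ (externalScaling s₀ σ s) * sin (π * u / (2 * d)) := by
      ext s u
      rw [hΦ, hφσ, externalScaling_eq_ite hs₀.le, apply_ite φ, apply_ite φ]
    rw [hQ, ← stripForm, hΦσ, stripForm_sin_mode hd (hγc.integrable_of_hasCompactSupport hγsupp)
      ((φ.memLp 2).integrable_sq.comp_externalScaling hs₀.le hσ)
      (integrable_sq_deriv_comp_externalScaling hs₀.le hσ φ.differentiable hφ1 hφ')
      (fun s hs => comp_externalScaling_eventuallyEq_const hφ1 (hsupp hs)),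
      integral_sq_deriv_comp_externalScaling hs₀.le hσ φ.differentiable hφ1]
  have htail : ∫ s in (Icc (-s₀) s₀)ᶜ, deriv φ s ^ 2 ≤ ∫ s, deriv φ s ^ 2 :=
    setIntegral_le_integral hφ' (ae_of_all _ fun s => sq_nonneg _)
  have hγp0 : γp = 0 := hγp ▸ max_eq_right (ciSup_le hγneg)
  have hγd : (1 / d) * ∫ s, γ s < 0 := mul_neg_of_pos_of_neg (by positivity) hγint
  have hbound : ∀ σ, 0 < σ → Q σ ≤ σ * (∫ s, deriv φ s ^ 2) + (1 / d) * ∫ s, γ s :=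
    fun σ hσ => by rw [hQ_eq σ hσ]; gcongr
  refine ⟨fun σ hσ => by simpa [hγp0] using hbound σ hσ, ?_⟩
  set M := ∫ s, deriv φ s ^ 2
  have hM : 0 ≤ M := integral_nonneg fun s => sq_nonneg _
  refine ⟨-((1 / d) * ∫ s, γ s) / (M + 1), div_pos (by linarith) (by linarith),
    fun σ hσ hσ₁ => ?_⟩
  rw [lt_div_iff₀ (by linarith)] at hσ₁
  nlinarith [hbound σ hσ]

/-- Goldstone–Jaffe type trial function estimate for a curved Dirichlet–Neumann strip:
if `γ ≤ 0` has compact support in `[-s₀,s₀]` and `∫ γ < 0`, then with the externally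
scaled trial function `Φ_σ(s,u) = √(2/d) φ_σ(s) sin(πu/(2d))` the shifted quadratic form
satisfies `q[Φ_σ] ≤ σ‖φ'‖²/(1-dγ₊) + (1/d)∫γ`, hence `q[Φ_σ] < 0` for small `σ > 0`. -/
theorem stmt9 (d s₀ : ℝ) (hd : 0 < d) (hs₀ : 0 < s₀)
    (γ : ℝ → ℝ) (hγc : Continuous γ) (hγsupp : HasCompactSupport γ)
    (hγsupp' : Function.support γ ⊆ Icc (-s₀) s₀)
    (hγneg : ∀ s, γ s ≤ 0) (hγint : (∫ s, γ s) < 0)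
    (hγbd : ∀ s, |γ s| < 1 / d)
    (γp : ℝ) (hγp : γp = max (⨆ s, γ s) 0)
    (φ : SchwartzMap ℝ ℝ)
    (hφ1 : ∀ s ∈ Icc (-s₀) s₀, φ s = 1)
    (φσ : ℝ → ℝ → ℝ)
    (hφσ : ∀ σ s, φσ σ s = if |s| ≤ s₀ then φ s
        else if s₀ ≤ s then φ (s₀ + σ * (s - s₀)) else φ (-s₀ + σ * (s + s₀)))
    (Φ : ℝ → ℝ → ℝ → ℝ)
    (hΦ : ∀ σ s u, Φ σ s u = Real.sqrt (2 / d) * φσ σ s * Real.sin (π * u / (2 * d)))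
    (Q : ℝ → ℝ)
    (hQ : ∀ σ, Q σ =
      (∫ s, ∫ u in (0:ℝ)..d,
        ((deriv (fun s' => Φ σ s' u) s) ^ 2 / (1 - u * γ s)
          + (deriv (fun u' => Φ σ s u') u) ^ 2 * (1 - u * γ s)))
      - (π ^ 2 / (4 * d ^ 2)) * ∫ s, ∫ u in (0:ℝ)..d, (Φ σ s u) ^ 2 * (1 - u * γ s)) :
    (∀ σ, 0 < σ →
      Q σ ≤ σ * (∫ s, (deriv (⇑φ) s) ^ 2) / (1 - d * γp) + (1 / d) * ∫ s, γ s) ∧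
    ∃ σ₁ > 0, ∀ σ, 0 < σ → σ < σ₁ → Q σ < 0 :=
  stmt9_general d s₀ hd hs₀ γ hγc hγsupp hγsupp' hγneg hγint γp hγp φ hφ1 φσ hφσ Φ hΦ Q hQ
end

section
/- Let d > 0, γ ∈ [0, 1/d), and let λ₀ be the infimum of the Rayleigh quotient of h̃ = -d²/du² - γ²/(4(1-uγ)²) with boundary conditions ψ(0)=0, ψ'(d)+αψ(d)=0, α = γ/(2(1-dγ)). Let λ_{0,1} be the lowest eigenvalue with the same boundary conditions but zero potential, with real eigenfunction ψ₀. Then π²/(4d²) ≤ λ_{0,1} - α·ψ₀(d)²/‖ψ₀‖² ≤ λ₀ - α·ψ₀(d)²/‖ψ₀‖² + γ²/(4(1-dγ)²). -/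
/-!
Integrating by parts, `λ_{0,1} - α ψ₀(d)² / ‖ψ₀‖² = ‖ψ₀'‖² / ‖ψ₀‖²`, and this is at least the
lowest eigenvalue `π²/(4d²)` of the problem with `ψ(0) = 0`, `ψ'(d) = 0`.

Both that bound and the second inequality come from one ground-state estimate: if `sin (ω x)`
satisfies the Robin condition at `d` and has no zero in `(0, d]`, then
`ω² ‖ψ‖² ≤ ‖ψ'‖² + α ψ(d)²` whenever `ψ(0) = 0`, because with `q = ω cot (ω x)` one has
`ψ'² - ω² ψ² - (q ψ²)' = (ψ' - q ψ)² ≥ 0`. For `α ≥ 0` the intermediate value theorem yields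
such an `ω` with `ω d < π`; `ω²` is then an eigenvalue, so `λ_{0,1} ≤ ω²`, and the potential
is at most `γ²/(4(1-dγ)²)` on `[0, d]`.
-/

open Real Set intervalIntegral Filter Topology

section GroundState

variable {ω : ℝ}

lemma hasDerivAt_mul_cos_div_sin (x : ℝ) (hx : sin (ω * x) ≠ 0) :
    HasDerivAt (fun x => ω * cos (ω * x) / sin (ω * x)) (-(ω ^ 2 / sin (ω * x) ^ 2)) x := by
  have hlin : HasDerivAt (fun x => ω * x) ω x := by simpa using (hasDerivAt_id x).const_mul ω
  refine ((hlin.cos.const_mul ω).div hlin.sin hx).congr_deriv ?_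
  field_simp
  linear_combination (-ω ^ 2) * sin_sq_add_cos_sq (ω * x)

lemma tendsto_mul_cos_div_sin_mul_sq (hω : ω ≠ 0) {ψ : ℝ → ℝ} (hψ : DifferentiableAt ℝ ψ 0)
    (hψ0 : ψ 0 = 0) :
    Tendsto (fun x => ω * cos (ω * x) / sin (ω * x) * ψ x ^ 2) (𝓝[≠] 0) (𝓝 0) := by
  have hsin : HasDerivAt (fun x => sin (ω * x)) ω 0 := by
    simpa using ((hasDerivAt_id (0 : ℝ)).const_mul ω).sin
  have hcos : Tendsto (fun x => ω * cos (ω * x)) (𝓝[≠] 0) (𝓝 ω) := by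
    have : Continuous (fun x => ω * cos (ω * x)) := by fun_prop
    simpa using this.continuousAt.tendsto.mono_left (nhdsWithin_le_nhds (a := (0 : ℝ)))
  have hψt : Tendsto ψ (𝓝[≠] 0) (𝓝 0) := by
    simpa [hψ0] using hψ.continuousAt.tendsto.mono_left (nhdsWithin_le_nhds (a := (0 : ℝ)))
  have hlim := (hcos.mul ((hasDerivAt_iff_tendsto_slope.mp hψ.hasDerivAt).div
    (hasDerivAt_iff_tendsto_slope.mp hsin) hω)).mul hψt
  rw [mul_zero] at hlim
  refine hlim.congr' ?_
  filter_upwards [self_mem_nhdsWithin] with x hx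
  rw [Pi.div_apply, slope_def_field, slope_def_field, hψ0, mul_zero, sin_zero,
    div_div_div_cancel_right₀ (sub_ne_zero.mpr hx)]
  ring

theorem sq_mul_integral_sq_le_of_robin {d α : ℝ} (hd : 0 < d) (hω : 0 < ω) (hωd : ω * d < π)
    (hRobin : ω * cos (ω * d) + α * sin (ω * d) = 0) {ψ : ℝ → ℝ} (hψ : ContDiff ℝ 1 ψ)
    (hψ0 : ψ 0 = 0) :
    ω ^ 2 * ∫ u in 0..d, ψ u ^ 2 ≤ (∫ u in 0..d, deriv ψ u ^ 2) + α * ψ d ^ 2 := by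
  set q : ℝ → ℝ := fun x => ω * cos (ω * x) / sin (ω * x)
  set g : ℝ → ℝ := fun u => deriv ψ u ^ 2 - ω ^ 2 * ψ u ^ 2
  -- `q 0 = 0` by the convention `x / 0 = 0`, matching the limit of `q x * ψ x ^ 2` at `0`
  set H : ℝ → ℝ := fun x => (∫ u in 0..x, g u) - q x * ψ x ^ 2
  have hψd : Differentiable ℝ ψ := hψ.differentiable one_ne_zero
  have hψ' : Continuous (deriv ψ) := hψ.continuous_deriv le_rfl
  have hgc : Continuous g := by fun_prop
  have hsin : ∀ x ∈ Ioc 0 d, 0 < sin (ω * x) := fun x hx =>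
    sin_pos_of_pos_of_lt_pi (mul_pos hω hx.1)
      ((mul_le_mul_of_nonneg_left hx.2 hω.le).trans_lt hωd)
  have hHderiv : ∀ x ∈ Ioc 0 d, HasDerivAt H ((deriv ψ x - q x * ψ x) ^ 2) x := by
    intro x hx
    have hs := (hsin x hx).ne'
    refine (hgc.integral_hasStrictDerivAt 0 x).hasDerivAt.sub
      ((hasDerivAt_mul_cos_div_sin x hs).mul ((hψd x).hasDerivAt.pow 2)) |>.congr_deriv ?_
    simp only [g, q, Pi.pow_apply]
    field_simp
    linear_combination -(ω * ψ x) ^ 2 * sin_sq_add_cos_sq (ω * x)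
  have hHcont : ContinuousOn H (Icc 0 d) := by
    intro x hx
    rcases hx.1.eq_or_lt with rfl | hx0
    · refine (continuousWithinAt_compl_self.mp ?_).continuousWithinAt
      have hG : ContinuousWithinAt (fun x => q x * ψ x ^ 2) {0}ᶜ 0 := by
        simpa [ContinuousWithinAt, hψ0] using tendsto_mul_cos_div_sin_mul_sq hω.ne' (hψd 0) hψ0
      exact (hgc.integral_hasStrictDerivAt 0 0).hasDerivAt.continuousAt.continuousWithinAt.sub hG
    · exact (hHderiv x ⟨hx0, hx.2⟩).continuousAt.continuousWithinAt
  have hmono : MonotoneOn H (Icc 0 d) :=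
    monotoneOn_of_hasDerivWithinAt_nonneg (convex_Icc 0 d) hHcont
      (fun x hx => by
        rw [interior_Icc] at hx ⊢
        exact (hHderiv x (Ioo_subset_Ioc_self hx)).hasDerivWithinAt)
      (fun _ _ => sq_nonneg _)
  have hH := hmono ⟨le_rfl, hd.le⟩ ⟨hd.le, le_rfl⟩ hd.le
  have hqd : q d * ψ d ^ 2 = -(α * ψ d ^ 2) := by
    have hs := (hsin d ⟨hd, le_rfl⟩).ne'
    simp only [q]
    field_simp
    linear_combination ψ d ^ 2 * hRobin
  simp only [H, q, hqd, integral_same, mul_zero, sin_zero, div_zero, zero_mul, sub_zero] at hH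
  have hgint : ∫ u in 0..d, g u = (∫ u in 0..d, deriv ψ u ^ 2) - ω ^ 2 * ∫ u in 0..d, ψ u ^ 2 := by
    rw [← integral_const_mul]
    exact integral_sub ((by fun_prop : Continuous fun u => deriv ψ u ^ 2).intervalIntegrable 0 d)
      ((by fun_prop : Continuous fun u => ω ^ 2 * ψ u ^ 2).intervalIntegrable 0 d)
  rw [hgint] at hH
  linarith

end GroundState

theorem pi_sq_div_four_mul_integral_sq_le {d : ℝ} (hd : 0 < d) {ψ : ℝ → ℝ} (hψ : ContDiff ℝ 1 ψ)
    (hψ0 : ψ 0 = 0) :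
    π ^ 2 / (4 * d ^ 2) * ∫ u in 0..d, ψ u ^ 2 ≤ ∫ u in 0..d, deriv ψ u ^ 2 := by
  have hωd : π / (2 * d) * d = π / 2 := by field_simp
  have h := sq_mul_integral_sq_le_of_robin (ω := π / (2 * d)) (α := 0) hd (by positivity)
    (by rw [hωd]; linarith [pi_pos]) (by rw [hωd, cos_pi_div_two]; ring) hψ hψ0
  rwa [zero_mul, add_zero, div_pow, mul_pow, show (2 : ℝ) ^ 2 = 4 by norm_num] at h

def robinEigenvalues (d α : ℝ) : Set ℝ :=
  {lam : ℝ | ∃ ψ : ℝ → ℝ, ContDiff ℝ 2 ψ ∧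
    (∃ u ∈ Icc (0:ℝ) d, ψ u ≠ 0) ∧ ψ 0 = 0 ∧ deriv ψ d + α * ψ d = 0 ∧
    ∀ u ∈ Icc (0:ℝ) d, -(deriv (deriv ψ) u) = lam * ψ u}

def perturbedRobinFormValues (d γ α : ℝ) : Set ℝ :=
  {r : ℝ | ∃ ψ : ℝ → ℝ, ContDiff ℝ 1 ψ ∧ ψ 0 = 0 ∧
    (∫ u in (0:ℝ)..d, (ψ u) ^ 2) = 1 ∧
    r = (∫ u in (0:ℝ)..d,
      ((deriv ψ u) ^ 2 - (γ ^ 2 / (4 * (1 - u * γ) ^ 2)) * (ψ u) ^ 2))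
      + α * (ψ d) ^ 2}

lemma integral_deriv_sq_of_robin_eigenfunction {d α lam : ℝ} (hd : 0 ≤ d) {ψ : ℝ → ℝ}
    (hψ : ContDiff ℝ 2 ψ) (hψ0 : ψ 0 = 0) (hψd : deriv ψ d + α * ψ d = 0)
    (heig : ∀ u ∈ Icc (0:ℝ) d, -(deriv (deriv ψ) u) = lam * ψ u) :
    ∫ u in 0..d, deriv ψ u ^ 2 = lam * (∫ u in 0..d, ψ u ^ 2) - α * ψ d ^ 2 := by
  have hψ' : ContDiff ℝ 1 (deriv ψ) := hψ.iterate_deriv' 1 1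
  have hparts := integral_mul_deriv_eq_deriv_mul
    (fun x _ => (hψ.differentiable two_ne_zero x).hasDerivAt)
    (fun x _ => (hψ'.differentiable one_ne_zero x).hasDerivAt)
    (hψ'.continuous.intervalIntegrable 0 d) ((hψ'.continuous_deriv le_rfl).intervalIntegrable 0 d)
  have hleft : ∫ u in 0..d, ψ u * deriv (deriv ψ) u = -(lam * ∫ u in 0..d, ψ u ^ 2) := by
    rw [← integral_const_mul, ← integral_neg]
    refine integral_congr fun u hu => ?_
    rw [uIcc_of_le hd] at hu
    linear_combination -ψ u * heig u hu
  rw [hleft, hψ0, zero_mul, sub_zero] at hparts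
  simp only [← sq] at hparts
  linear_combination hparts + ψ d * hψd

lemma exists_robin_frequency {d α : ℝ} (hd : 0 < d) (hα : 0 ≤ α) :
    ∃ ω, 0 < ω ∧ ω * d < π ∧ ω * cos (ω * d) + α * sin (ω * d) = 0 := by
  set f : ℝ → ℝ := fun x => x * cos (x * d) + α * sin (x * d)
  have hf : Continuous f := by fun_prop
  have hhalf : π / (2 * d) * d = π / 2 := by field_simp
  have hfull : π / d * d = π := by field_simp
  have hab : π / (2 * d) ≤ π / d := div_le_div_of_nonneg_left pi_pos.le hd (by linarith)
  have h0 : (0 : ℝ) ∈ Icc (f (π / d)) (f (π / (2 * d))) := by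
    simp only [f, hhalf, hfull, cos_pi_div_two, sin_pi_div_two, cos_pi, sin_pi]
    constructor <;> nlinarith [div_pos pi_pos hd]
  obtain ⟨ω, ⟨hω1, hω2⟩, hfω⟩ := intermediate_value_Icc' hab hf.continuousOn h0
  have hωne : ω ≠ π / d := by
    rintro rfl
    simp only [f, hfull, cos_pi, sin_pi] at hfω
    linarith [div_pos pi_pos hd]
  refine ⟨ω, lt_of_lt_of_le (by positivity) hω1, ?_, hfω⟩
  rw [← lt_div_iff₀ hd]
  exact lt_of_le_of_ne hω2 hωne

lemma sq_mem_robinEigenvalues {d α ω : ℝ} (hd : 0 < d) (hω : 0 < ω) (hωd : ω * d < π)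
    (hRobin : ω * cos (ω * d) + α * sin (ω * d) = 0) : ω ^ 2 ∈ robinEigenvalues d α := by
  have hderiv : deriv (fun u => sin (ω * u)) = fun u => ω * cos (ω * u) := by
    ext u
    simpa [mul_comm] using (((hasDerivAt_id u).const_mul ω).sin).deriv
  have hderiv2 : deriv (fun u => ω * cos (ω * u)) = fun u => -(ω ^ 2 * sin (ω * u)) := by
    ext u
    refine ((((hasDerivAt_id u).const_mul ω).cos).const_mul ω).deriv.trans ?_
    simp only [id, mul_one]
    ring
  refine ⟨fun u => sin (ω * u), by fun_prop, ⟨d, ⟨hd.le, le_rfl⟩, ?_⟩, by simp, ?_, ?_⟩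
  · exact (sin_pos_of_pos_of_lt_pi (by positivity) hωd).ne'
  · rwa [hderiv]
  · intro u _
    rw [hderiv, hderiv2, neg_neg]

lemma perturbedRobinFormValues_nonempty {d : ℝ} (hd : 0 < d) (γ α : ℝ) :
    (perturbedRobinFormValues d γ α).Nonempty := by
  refine ⟨_, fun u => √(3 / d ^ 3) * u, by fun_prop, by simp, ?_, rfl⟩
  simp only [mul_pow, sq_sqrt (by positivity : (0 : ℝ) ≤ 3 / d ^ 3)]
  rw [integral_const_mul, integral_pow]
  norm_num [hd.ne']

lemma inverse_square_potential_le {d γ u : ℝ} (hγ : 0 ≤ γ) (hdγ : d * γ < 1) (hu : u ∈ Icc 0 d) :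
    γ ^ 2 / (4 * (1 - u * γ) ^ 2) ≤ γ ^ 2 / (4 * (1 - d * γ) ^ 2) := by
  have huγ : u * γ ≤ d * γ := mul_le_mul_of_nonneg_right hu.2 hγ
  gcongr

lemma sq_sub_le_sInf_perturbedRobinFormValues {d γ α ω : ℝ} (hd : 0 < d) (hγ : 0 ≤ γ)
    (hdγ : d * γ < 1) (hω : 0 < ω) (hωd : ω * d < π)
    (hRobin : ω * cos (ω * d) + α * sin (ω * d) = 0) :
    ω ^ 2 - γ ^ 2 / (4 * (1 - d * γ) ^ 2) ≤ sInf (perturbedRobinFormValues d γ α) := by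
  refine le_csInf (perturbedRobinFormValues_nonempty hd γ α) ?_
  rintro _ ⟨ψ, hψ, hψ0, hnorm, rfl⟩
  set M := γ ^ 2 / (4 * (1 - d * γ) ^ 2)
  have hpos : ∀ u ∈ Icc 0 d, 0 < 1 - u * γ := fun u hu => by
    nlinarith [mul_le_mul_of_nonneg_right hu.2 hγ]
  have hVint : IntervalIntegrable (fun u => γ ^ 2 / (4 * (1 - u * γ) ^ 2) * ψ u ^ 2)
      MeasureTheory.volume 0 d := by
    refine ContinuousOn.intervalIntegrable ?_
    rw [uIcc_of_le hd.le]
    have hψc := hψ.continuous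
    exact ContinuousOn.mul (continuousOn_const.div (by fun_prop) fun u hu => by
      have := hpos u hu; positivity) (by fun_prop)
  have hV : ∫ u in 0..d, γ ^ 2 / (4 * (1 - u * γ) ^ 2) * ψ u ^ 2 ≤ M := by
    calc ∫ u in 0..d, γ ^ 2 / (4 * (1 - u * γ) ^ 2) * ψ u ^ 2
        ≤ ∫ u in 0..d, M * ψ u ^ 2 := by
          refine integral_mono_on hd.le hVint
            ((by fun_prop : Continuous fun u => M * ψ u ^ 2).intervalIntegrable 0 d) fun u hu => ?_
          exact mul_le_mul_of_nonneg_right (inverse_square_potential_le hγ hdγ hu) (sq_nonneg _)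
      _ = M := by rw [integral_const_mul, hnorm, mul_one]
  have hground := sq_mul_integral_sq_le_of_robin hd hω hωd hRobin hψ hψ0
  rw [hnorm, mul_one] at hground
  have hψ' := hψ.continuous_deriv le_rfl
  rw [integral_sub ((by fun_prop : Continuous fun u => deriv ψ u ^ 2).intervalIntegrable 0 d) hVint]
  linarith

/-- Comparison of the lowest eigenvalues: with `α = γ/(2(1-dγ))`, if `λ₀` is the infimum
of the Rayleigh quotient of `h̃ = -d²/du² - γ²/(4(1-uγ)²)` with the Robin condition and
`λ_{0,1}` is the lowest eigenvalue of the free operator with the same boundary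
conditions, with real eigenfunction `ψ₀`, then
`π²/(4d²) ≤ λ_{0,1} - α ψ₀(d)²/‖ψ₀‖² ≤ λ₀ - α ψ₀(d)²/‖ψ₀‖² + γ²/(4(1-dγ)²)`. -/
theorem stmt15 (d γ α lam0 lam01 : ℝ) (hd : 0 < d) (hγ0 : 0 ≤ γ) (hγd : γ < 1 / d)
    (hα : α = γ / (2 * (1 - d * γ)))
    -- `λ₀` is the infimum of the Rayleigh quotient of `h̃`
    (hlam0 : lam0 = sInf {r : ℝ | ∃ ψ : ℝ → ℝ, ContDiff ℝ 1 ψ ∧ ψ 0 = 0 ∧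
        (∫ u in (0:ℝ)..d, (ψ u) ^ 2) = 1 ∧
        r = (∫ u in (0:ℝ)..d,
          ((deriv ψ u) ^ 2 - (γ ^ 2 / (4 * (1 - u * γ) ^ 2)) * (ψ u) ^ 2))
          + α * (ψ d) ^ 2})
    -- `λ_{0,1}` is the lowest eigenvalue of the free operator, with eigenfunction `ψ₀`
    (ψ₀ : ℝ → ℝ) (hψ₀ : ContDiff ℝ 2 ψ₀)
    (hψ₀0 : ψ₀ 0 = 0) (hψ₀d : deriv ψ₀ d + α * ψ₀ d = 0)
    (heig : ∀ u ∈ Icc (0:ℝ) d, -(deriv (deriv ψ₀) u) = lam01 * ψ₀ u)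
    (hnorm : 0 < ∫ u in (0:ℝ)..d, (ψ₀ u) ^ 2)
    (hleast : IsLeast {lam : ℝ | ∃ ψ : ℝ → ℝ, ContDiff ℝ 2 ψ ∧
        (∃ u ∈ Icc (0:ℝ) d, ψ u ≠ 0) ∧ ψ 0 = 0 ∧ deriv ψ d + α * ψ d = 0 ∧
        ∀ u ∈ Icc (0:ℝ) d, -(deriv (deriv ψ) u) = lam * ψ u} lam01) :
    π ^ 2 / (4 * d ^ 2)
      ≤ lam01 - α * (ψ₀ d) ^ 2 / (∫ u in (0:ℝ)..d, (ψ₀ u) ^ 2) ∧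
    lam01 - α * (ψ₀ d) ^ 2 / (∫ u in (0:ℝ)..d, (ψ₀ u) ^ 2)
      ≤ lam0 - α * (ψ₀ d) ^ 2 / (∫ u in (0:ℝ)..d, (ψ₀ u) ^ 2)
        + γ ^ 2 / (4 * (1 - d * γ) ^ 2) := by
  have hdγ : d * γ < 1 := by rwa [lt_div_iff₀ hd, mul_comm] at hγd
  have hα0 : 0 ≤ α := hα ▸ div_nonneg hγ0 (by linarith)
  have hquot : lam01 - α * ψ₀ d ^ 2 / (∫ u in (0:ℝ)..d, ψ₀ u ^ 2)
      = (∫ u in (0:ℝ)..d, deriv ψ₀ u ^ 2) / ∫ u in (0:ℝ)..d, ψ₀ u ^ 2 := by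
    rw [integral_deriv_sq_of_robin_eigenfunction hd.le hψ₀ hψ₀0 hψ₀d heig]
    field_simp
  refine ⟨?_, ?_⟩
  · rw [hquot, le_div_iff₀ hnorm]
    exact pi_sq_div_four_mul_integral_sq_le hd (hψ₀.of_le one_le_two) hψ₀0
  · obtain ⟨ω, hω, hωd, hRobin⟩ := exists_robin_frequency hd hα0
    have hlam01 : lam01 ≤ ω ^ 2 := hleast.2 (sq_mem_robinEigenvalues hd hω hωd hRobin)
    have hlam0' : ω ^ 2 - γ ^ 2 / (4 * (1 - d * γ) ^ 2) ≤ lam0 := by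
      rw [hlam0]
      exact sq_sub_le_sInf_perturbedRobinFormValues hd hγ0 hdγ hω hωd hRobin
    linarith
end
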